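/- arXiv:1012.2062 — 8 statements merged into one kernel-verified Lean document; each statement's English description precedes it below -/
import Mathlib

section
/- For all natural numbers s and k, and all real numbers x, π ∈ [0,1] with 1 − π + xπ > 0, one has (x / (1 − π + xπ)) · ∑_{r=k}^{s} r · b_{s,r}(1 − π + xπ) = ∑_{r=0}^{s} ∑_{i=0}^{s−r} 1[r + i ≥ k] · r · b_{s,r}(x) · b_{s−r,i}(1 − π). -/
/-!
Run `s` trials, each succeeding at a first stage with probability `x` and, failing that, at a
second stage with probability `1 - π`. The total number of successes is binomial with parameter
`q = x + (1 - x)(1 - π) = 1 - π + xπ`, and given `m` total successes the number of first-stage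
successes is binomial with parameter `x / q`, hence has mean `m x / q`. Summing over `m ≥ k`
gives the identity.
-/

/-- Binomial probability `b_{s,r}(p) = (s choose r) p^r (1-p)^(s-r)`. -/
noncomputable def binomProb (s r : ℕ) (p : ℝ) : ℝ :=
  (s.choose r : ℝ) * p ^ r * (1 - p) ^ (s - r)

open Finset

lemma binomProb_eq_eval_bernsteinPolynomial (s r : ℕ) (p : ℝ) :
    binomProb s r p = (bernsteinPolynomial ℝ s r).eval p := by
  simp [binomProb, bernsteinPolynomial]

lemma sum_range_mul_binomProb (s : ℕ) (p : ℝ) :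
    ∑ r ∈ range (s + 1), (r : ℝ) * binomProb s r p = s * p := by
  simpa [binomProb_eq_eval_bernsteinPolynomial, Polynomial.eval_finsetSum] using
    congrArg (Polynomial.eval p) (bernsteinPolynomial.sum_smul ℝ s)

lemma binomProb_mul_binomProb_sub {s r j : ℕ} (hs : r + j ≤ s) {x y : ℝ}
    (hq : x + (1 - x) * y ≠ 0) :
    binomProb s r x * binomProb (s - r) j y =
      binomProb s (r + j) (x + (1 - x) * y) * binomProb (r + j) r (x / (x + (1 - x) * y)) := by
  set q := x + (1 - x) * y
  obtain ⟨n, rfl⟩ := Nat.exists_eq_add_of_le hs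
  have hchoose : ((r + j + n).choose (r + j) : ℝ) * ((r + j).choose r : ℝ) =
      ((r + j + n).choose r : ℝ) * ((j + n).choose j : ℝ) := by
    have := Nat.choose_mul (n := r + j + n) (Nat.le_add_right r j)
    rw [show r + j + n - r = j + n by omega, Nat.add_sub_cancel_left] at this
    exact_mod_cast this
  have h1q : 1 - q = (1 - x) * (1 - y) := by ring
  have hqx : 1 - x / q = (1 - x) * y / q := by field_simp; ring
  rw [binomProb, binomProb, binomProb, binomProb, show r + j + n - r = j + n by omega,
    Nat.add_sub_cancel_left, Nat.add_sub_cancel_left, Nat.add_sub_cancel_left, h1q, hqx,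
    div_pow, div_pow, mul_pow, mul_pow, pow_add q]
  field_simp
  linear_combination (-x ^ r * y ^ j * (1 - x) ^ j * (1 - x) ^ n * (1 - y) ^ n) * hchoose

lemma sum_range_sum_range_sub {M : Type*} [AddCommMonoid M] (s : ℕ) (f : ℕ → ℕ → M) :
    ∑ r ∈ range (s + 1), ∑ i ∈ range (s - r + 1), f r i =
      ∑ m ∈ range (s + 1), ∑ r ∈ range (m + 1), f r (m - r) := by
  rw [sum_range_diag_flip]
  refine sum_congr rfl fun r hr => ?_
  rw [Nat.sub_add_comm (mem_range_succ_iff.mp hr)]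

lemma sum_range_mul_binomProb_mul_binomProb_sub {s m : ℕ} (hm : m ≤ s) {x y : ℝ}
    (hq : x + (1 - x) * y ≠ 0) :
    ∑ r ∈ range (m + 1), (r : ℝ) * binomProb s r x * binomProb (s - r) (m - r) y =
      x / (x + (1 - x) * y) * (m * binomProb s m (x + (1 - x) * y)) := by
  calc ∑ r ∈ range (m + 1), (r : ℝ) * binomProb s r x * binomProb (s - r) (m - r) y
      = ∑ r ∈ range (m + 1),
          binomProb s m (x + (1 - x) * y) * (r * binomProb m r (x / (x + (1 - x) * y))) := by
        refine sum_congr rfl fun r hr => ?_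
        have hrm : r + (m - r) = m := Nat.add_sub_cancel' (mem_range_succ_iff.mp hr)
        rw [mul_assoc, binomProb_mul_binomProb_sub (by omega) hq, hrm]
        ring
    _ = x / (x + (1 - x) * y) * (m * binomProb s m (x + (1 - x) * y)) := by
        rw [← mul_sum, sum_range_mul_binomProb]
        ring

theorem stmt0_general (s k : ℕ) (x π : ℝ)
    (hpos : 0 < 1 - π + x * π) :
    (x / (1 - π + x * π)) * ∑ r ∈ Finset.Icc k s, (r : ℝ) * binomProb s r (1 - π + x * π) =
      ∑ r ∈ Finset.range (s + 1), ∑ i ∈ Finset.range (s - r + 1),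
        (if k ≤ r + i then (1:ℝ) else 0) * (r : ℝ) * binomProb s r x * binomProb (s - r) i (1 - π) := by
  have hq : x + (1 - x) * (1 - π) = 1 - π + x * π := by ring
  have hIcc : Icc k s = (range (s + 1)).filter (k ≤ ·) := by
    ext m
    simp only [mem_Icc, mem_filter, mem_range]
    omega
  rw [sum_range_sum_range_sub, hIcc, mul_sum, sum_filter]
  refine sum_congr rfl fun m hm => ?_
  have hsum := sum_range_mul_binomProb_mul_binomProb_sub (mem_range_succ_iff.mp hm)
    (hq ▸ hpos.ne' : x + (1 - x) * (1 - π) ≠ 0)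
  rw [hq] at hsum
  rw [← hsum, ← boole_mul, mul_sum]
  refine sum_congr rfl fun r hr => ?_
  rw [Nat.add_sub_cancel' (mem_range_succ_iff.mp hr)]
  ring

theorem stmt0 (s k : ℕ) (x π : ℝ) (hx : x ∈ Set.Icc (0:ℝ) 1) (hπ : π ∈ Set.Icc (0:ℝ) 1)
    (hpos : 0 < 1 - π + x * π) :
    (x / (1 - π + x * π)) * ∑ r ∈ Finset.Icc k s, (r : ℝ) * binomProb s r (1 - π + x * π) =
      ∑ r ∈ Finset.range (s + 1), ∑ i ∈ Finset.range (s - r + 1),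
        (if k ≤ r + i then (1:ℝ) else 0) * (r : ℝ) * binomProb s r x * binomProb (s - r) i (1 - π) :=
  stmt0_general s k x π hpos
end

section
/- Let p : ℕ → [0,∞) satisfy ∑_{s} s³ p_s < ∞, and for each s let (t_{s,ℓ})_{ℓ=0}^{s} be nonnegative reals with ∑_{ℓ=0}^{s} t_{s,ℓ} = 1. Then the function a(z) := ∑_{s=0}^∞ p_s ∑_{ℓ=0}^{s} t_{s,ℓ} ∑_{r=s−ℓ}^{s} r b_{s,r}(z) has a derivative at z = 1 within the interval [0,1], and this derivative equals ∑_{s} s(s−1) p_s t_{s,0} + ∑_{s} s p_s. -/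
open Polynomial Finset
open scoped fwdDiff

theorem bernsteinPolynomial.derivative_sum_smul {R : Type*} [CommRing R] (n : ℕ) (w : ℕ → R) :
    derivative (∑ ν ∈ range (n + 1), w ν • bernsteinPolynomial R n ν) =
      n • ∑ j ∈ range n, Δ_[1] w j • bernsteinPolynomial R (n - 1) j := by
  cases n with
  | zero => simp [bernsteinPolynomial]
  | succ m =>
    have shift : ∑ j ∈ range (m + 1), w (j + 1) • bernsteinPolynomial R m (j + 1)
        + w 0 • bernsteinPolynomial R m 0 = ∑ j ∈ range (m + 1), w j • bernsteinPolynomial R m j := by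
      rw [← sum_range_succ' (fun j => w j • bernsteinPolynomial R m j), sum_range_succ,
        bernsteinPolynomial.eq_zero_of_lt R (Nat.lt_succ_self m), smul_zero, add_zero]
    rw [sum_range_succ', derivative_add, derivative_sum, Nat.add_sub_cancel]
    simp only [fwdDiff, sub_smul, sum_sub_distrib]
    rw [← shift]
    simp only [derivative_smul, bernsteinPolynomial.derivative_succ_aux,
      bernsteinPolynomial.derivative_zero, mul_sub, smul_sub, sum_sub_distrib, nsmul_eq_mul,
      Nat.cast_add, Nat.cast_one, ← mul_smul_comm, ← mul_sum, neg_mul, smul_neg, Nat.add_sub_cancel]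
    ring

theorem abs_sum_mul_le_of_sum_eq_one {ι : Type*} {S : Finset ι} {c a : ι → ℝ} {M : ℝ}
    (hc : ∀ i ∈ S, 0 ≤ c i) (hc1 : ∑ i ∈ S, c i = 1) (ha : ∀ i ∈ S, |a i| ≤ M) :
    |∑ i ∈ S, c i * a i| ≤ M :=
  calc |∑ i ∈ S, c i * a i| ≤ ∑ i ∈ S, c i * M := by
        refine (abs_sum_le_sum_abs _ _).trans (sum_le_sum fun i hi => ?_)
        rw [abs_mul, abs_of_nonneg (hc i hi)]
        exact mul_le_mul_of_nonneg_left (ha i hi) (hc i hi)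
    _ = M := by rw [← sum_mul, hc1, one_mul]

theorem summable_pow_mul_of_le {p : ℕ → ℝ} (hp : ∀ s, 0 ≤ p s) {k m : ℕ} (hk : k ≠ 0)
    (hkm : k ≤ m) (h : Summable fun s : ℕ => (s : ℝ) ^ m * p s) :
    Summable fun s : ℕ => (s : ℝ) ^ k * p s := by
  refine h.of_nonneg_of_le (fun s => by have := hp s; positivity) fun s => ?_
  refine mul_le_mul_of_nonneg_right ?_ (hp s)
  rcases s with _ | s
  · simp [zero_pow hk, zero_pow (show m ≠ 0 by omega)]
  · exact pow_le_pow_right₀ (by simp) hkm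

theorem hasDerivWithinAt_tsum_of_convex {α E : Type*} [NormedAddCommGroup E] [NormedSpace ℝ E]
    [CompleteSpace E] {s : Set ℝ} (hs : Convex ℝ s) {f f' : α → ℝ → E} {u : α → ℝ}
    (hu : Summable u) (hf : ∀ n, ∀ y ∈ s, HasDerivWithinAt (f n) (f' n y) s y)
    (hf' : ∀ n, ∀ y ∈ s, ‖f' n y‖ ≤ u n) {x : ℝ} (hx : x ∈ s)
    (hfx : Summable fun n => f n x) :
    HasDerivWithinAt (fun y => ∑' n, f n y) (∑' n, f' n x) s x := by
  have lipschitz : ∀ n, ∀ y ∈ s, ‖f n y - f n x‖ ≤ u n * ‖y - x‖ := fun n y hy =>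
    hs.norm_image_sub_le_of_norm_hasDerivWithin_le (hf n) (hf' n) hx hy
  have slope_le : ∀ n, ∀ y ∈ s, ‖slope (f n) x y‖ ≤ u n := by
    intro n y hy
    rcases eq_or_ne y x with rfl | hyx
    · simpa using (norm_nonneg _).trans (hf' n y hy)
    rw [slope_def_module, norm_smul, norm_inv,
      inv_mul_le_iff₀ (norm_pos_iff.2 (sub_ne_zero.2 hyx)), mul_comm]
    exact lipschitz n y hy
  rw [hasDerivWithinAt_iff_tendsto_slope]
  refine (tendsto_tsum_of_dominated_convergence hu
    (fun n => hasDerivWithinAt_iff_tendsto_slope.1 (hf n x hx))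
    (eventually_nhdsWithin_of_forall fun y hy n => slope_le n y hy.1)).congr' ?_
  filter_upwards [self_mem_nhdsWithin] with y hy
  have hfy : Summable fun n => f n y := by
    simpa using ((hu.mul_right ‖y - x‖).of_norm_bounded (lipschitz · y hy.1)).add hfx
  simp only [slope_def_module]
  rw [tsum_const_smul'', hfy.tsum_sub hfx]

theorem binomProb_eq_eval (n r : ℕ) (z : ℝ) :
    binomProb n r z = (bernsteinPolynomial ℝ n r).eval z := by
  simp [binomProb, bernsteinPolynomial]

theorem sum_binomProb (n : ℕ) (z : ℝ) : ∑ r ∈ range (n + 1), binomProb n r z = 1 := by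
  simpa [binomProb_eq_eval, eval_finsetSum] using
    congrArg (eval z) (bernsteinPolynomial.sum ℝ n)

theorem binomProb_nonneg (n r : ℕ) {z : ℝ} (hz : z ∈ Set.Icc (0 : ℝ) 1) :
    0 ≤ binomProb n r z := by
  have := sub_nonneg.2 hz.2
  have := hz.1
  unfold binomProb
  positivity

theorem binomProb_one (n r : ℕ) : binomProb n r 1 = if r = n then 1 else 0 := by
  rw [binomProb_eq_eval, bernsteinPolynomial.eval_at_1]

noncomputable def binomExpect (n : ℕ) (w : ℕ → ℝ) (z : ℝ) : ℝ :=
  ∑ r ∈ range (n + 1), binomProb n r z * w r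

theorem binomExpect_eq_eval (n : ℕ) (w : ℕ → ℝ) :
    binomExpect n w = fun z => (∑ ν ∈ range (n + 1), w ν • bernsteinPolynomial ℝ n ν).eval z := by
  ext z
  simp [binomExpect, binomProb_eq_eval, eval_finsetSum, mul_comm]

theorem binomExpect_one (n : ℕ) (w : ℕ → ℝ) : binomExpect n w 1 = w n := by
  simp [binomExpect, binomProb_one]

theorem abs_binomExpect_le {n : ℕ} {w : ℕ → ℝ} {M : ℝ} (hw : ∀ r ≤ n, |w r| ≤ M) {z : ℝ}
    (hz : z ∈ Set.Icc (0 : ℝ) 1) : |binomExpect n w z| ≤ M :=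
  abs_sum_mul_le_of_sum_eq_one (fun r _ => binomProb_nonneg n r hz) (sum_binomProb n z)
    fun r hr => hw r (Nat.lt_succ_iff.1 (mem_range.1 hr))

theorem hasDerivAt_binomExpect (n : ℕ) (w : ℕ → ℝ) (z : ℝ) :
    HasDerivAt (binomExpect n w) (n * binomExpect (n - 1) (Δ_[1] w) z) z := by
  rw [binomExpect_eq_eval]
  have h := (∑ ν ∈ range (n + 1), w ν • bernsteinPolynomial ℝ n ν).hasDerivAt z
  rw [bernsteinPolynomial.derivative_sum_smul] at h
  refine h.congr_deriv ?_
  rw [binomExpect_eq_eval]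
  cases n with
  | zero => simp
  | succ m => simp

theorem deriv_binomExpect_one (n : ℕ) (w : ℕ → ℝ) :
    deriv (binomExpect n w) 1 = n * (w n - w (n - 1)) := by
  rw [(hasDerivAt_binomExpect n w 1).deriv, binomExpect_one]
  cases n with
  | zero => simp
  | succ m => simp [fwdDiff]

theorem abs_deriv_binomExpect_le {n : ℕ} {w : ℕ → ℝ} {M : ℝ} (hw : ∀ j < n, |Δ_[1] w j| ≤ M)
    {z : ℝ} (hz : z ∈ Set.Icc (0 : ℝ) 1) : |deriv (binomExpect n w) z| ≤ n * M := by
  rw [(hasDerivAt_binomExpect n w z).deriv, abs_mul, Nat.abs_cast]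
  cases n with
  | zero => simp
  | succ m =>
    exact mul_le_mul_of_nonneg_left
      (abs_binomExpect_le (fun j hj => hw j (by omega)) hz) (Nat.cast_nonneg _)

def tailWeight (m r : ℕ) : ℝ := if m ≤ r then r else 0

theorem sum_Icc_mul_binomProb (m s : ℕ) (z : ℝ) :
    ∑ r ∈ Icc m s, (r : ℝ) * binomProb s r z = binomExpect s (tailWeight m) z := by
  simp only [binomExpect, tailWeight, mul_ite, mul_zero, ← sum_filter]
  refine sum_congr ?_ fun r _ => mul_comm _ _
  ext r
  simp only [mem_Icc, mem_filter, mem_range]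
  omega

theorem abs_fwdDiff_tailWeight_le {m s j : ℕ} (hj : j < s) : |Δ_[1] (tailWeight m) j| ≤ s := by
  have hjs : (j : ℝ) + 1 ≤ s := by exact_mod_cast hj
  simp only [fwdDiff, tailWeight, Nat.cast_add, Nat.cast_one]
  split_ifs <;> first | omega | rw [abs_le]; constructor <;> linarith [(j.cast_nonneg : (0:ℝ) ≤ j)]

theorem deriv_binomExpect_tailWeight_one {s ℓ : ℕ} (hℓ : ℓ ≤ s) :
    deriv (binomExpect s (tailWeight (s - ℓ))) 1 = if ℓ = 0 then (s : ℝ) ^ 2 else s := by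
  rw [deriv_binomExpect_one]
  rcases s with _ | n
  · simp
  rcases eq_or_ne ℓ 0 with rfl | hℓ0
  · simp [tailWeight, sq]
  · simp [tailWeight, hℓ0, show n + 1 - ℓ ≤ n by omega]

section

variable {s : ℕ} {t : ℕ → ℝ}

theorem abs_sum_mul_deriv_binomExpect_tailWeight_le (ht : ∀ ℓ, 0 ≤ t ℓ)
    (ht1 : ∑ ℓ ∈ range (s + 1), t ℓ = 1) {z : ℝ} (hz : z ∈ Set.Icc (0 : ℝ) 1) :
    |∑ ℓ ∈ range (s + 1), t ℓ * deriv (binomExpect s (tailWeight (s - ℓ))) z| ≤ (s : ℝ) ^ 2 := by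
  rw [sq]
  exact abs_sum_mul_le_of_sum_eq_one (fun ℓ _ => ht ℓ) ht1
    fun ℓ _ => abs_deriv_binomExpect_le (fun j hj => abs_fwdDiff_tailWeight_le hj) hz

theorem sum_mul_deriv_binomExpect_tailWeight_one (ht1 : ∑ ℓ ∈ range (s + 1), t ℓ = 1) :
    ∑ ℓ ∈ range (s + 1), t ℓ * deriv (binomExpect s (tailWeight (s - ℓ))) 1
      = (s : ℝ) * ((s : ℝ) - 1) * t 0 + s := by
  rw [sum_range_succ'] at ht1
  rw [sum_congr rfl fun ℓ hℓ => by
    rw [deriv_binomExpect_tailWeight_one (mem_range_succ_iff.1 hℓ)], sum_range_succ']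
  simp only [Nat.succ_ne_zero, if_false, if_true, ← sum_mul]
  linear_combination (s : ℝ) * ht1

end

theorem stmt3 (p : ℕ → ℝ) (hp : ∀ s, 0 ≤ p s)
    (hp3 : Summable fun s : ℕ => (s : ℝ) ^ 3 * p s)
    (t : ℕ → ℕ → ℝ) (ht : ∀ s ℓ, 0 ≤ t s ℓ)
    (ht1 : ∀ s, ∑ ℓ ∈ Finset.range (s + 1), t s ℓ = 1) :
    HasDerivWithinAt
      (fun z => ∑' s : ℕ, p s * ∑ ℓ ∈ Finset.range (s + 1),
        t s ℓ * ∑ r ∈ Finset.Icc (s - ℓ) s, (r : ℝ) * binomProb s r z)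
      ((∑' s : ℕ, (s : ℝ) * ((s : ℝ) - 1) * p s * t s 0) + ∑' s : ℕ, (s : ℝ) * p s)
      (Set.Icc 0 1) 1 := by
  have hdom : Summable fun s : ℕ => (s : ℝ) ^ 2 * p s :=
    summable_pow_mul_of_le hp two_ne_zero (by norm_num) hp3
  have hmean : Summable fun s : ℕ => (s : ℝ) * p s := by
    simpa using summable_pow_mul_of_le hp one_ne_zero (by norm_num) hp3
  set f' : ℕ → ℝ → ℝ := fun s z =>
    p s * ∑ ℓ ∈ range (s + 1), t s ℓ * deriv (binomExpect s (tailWeight (s - ℓ))) z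
  have hderiv : ∀ s z, HasDerivAt
      (fun z => p s * ∑ ℓ ∈ range (s + 1), t s ℓ * binomExpect s (tailWeight (s - ℓ)) z)
      (f' s z) z := fun s z =>
    (HasDerivAt.fun_sum fun ℓ _ =>
      (hasDerivAt_binomExpect _ _ z).differentiableAt.hasDerivAt.const_mul (t s ℓ)).const_mul (p s)
  have hbound : ∀ s, ∀ z ∈ Set.Icc (0 : ℝ) 1, ‖f' s z‖ ≤ (s : ℝ) ^ 2 * p s := fun s z hz => by
    rw [Real.norm_eq_abs, abs_mul, abs_of_nonneg (hp s), mul_comm]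
    exact mul_le_mul_of_nonneg_right
      (abs_sum_mul_deriv_binomExpect_tailWeight_le (ht s) (ht1 s) hz) (hp s)
  have hvalue : ∀ s, f' s 1 = (s : ℝ) * ((s : ℝ) - 1) * p s * t s 0 + (s : ℝ) * p s := fun s => by
    simp only [f', sum_mul_deriv_binomExpect_tailWeight_one (ht1 s)]
    ring
  have hsum_one : Summable fun s =>
      p s * ∑ ℓ ∈ range (s + 1), t s ℓ * binomExpect s (tailWeight (s - ℓ)) 1 := by
    simpa [binomExpect_one, tailWeight, ← sum_mul, ht1, mul_comm] using hmean
  have hsum_A : Summable fun s : ℕ => (s : ℝ) * ((s : ℝ) - 1) * p s * t s 0 :=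
    ((hdom.of_norm_bounded fun s => hbound s 1 ⟨zero_le_one, le_rfl⟩).sub hmean).congr
      fun s => by rw [hvalue]; ring
  simp only [sum_Icc_mul_binomProb]
  have h := hasDerivWithinAt_tsum_of_convex (convex_Icc 0 1) hdom
    (fun s z _ => (hderiv s z).hasDerivWithinAt) hbound ⟨zero_le_one, le_rfl⟩ hsum_one
  rwa [tsum_congr hvalue, hsum_A.tsum_add hmean] at h
end

section
/- Let g : [0,1] → ℝ be continuous with g(0) ≤ 0 and g(1) = 0, and suppose g has a derivative L at 1 within [0,1] with L < 0. Then the set S := {z ∈ [0,1) : g(z) = 0} is nonempty, its supremum ξ := sup S satisfies ξ < 1 and g(ξ) = 0, and g(z) > 0 for every z ∈ (ξ, 1). -/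
/-!
A negative left derivative at the zero `x = 1` makes `g` positive on some `(l, 1)`. Zeros in
`[0, 1)` therefore lie in a compact interval `[0, c]` with `c < 1` and `g c > 0`, so the zero set
is compact and nonempty (intermediate value theorem, since `g 0 ≤ 0`) and has a greatest element
`ξ`. Past `ξ`, `g` cannot become nonpositive again: from such a point the intermediate value
theorem on `[z, c]` would produce a zero larger than `ξ`.
-/

open Set Filter Topology

theorem HasDerivWithinAt.eventually_nhdsLT_pos {f : ℝ → ℝ} {f' x : ℝ}
    (hf : HasDerivWithinAt f f' (Iio x) x) (hf' : f' < 0) (hx : f x = 0) :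
    ∀ᶠ z in 𝓝[<] x, 0 < f z := by
  filter_upwards [hf.limsup_slope_le' (lt_irrefl x) hf', self_mem_nhdsWithin] with z hslope hzx
  rw [slope_def_field, hx, sub_zero] at hslope
  simpa using (div_lt_iff_of_neg (sub_neg.mpr hzx)).mp hslope

theorem ContinuousOn.exists_isGreatest_zero_pos_after {f : ℝ → ℝ} {a b : ℝ} (hab : a ≤ b)
    (hf : ContinuousOn f (Icc a b)) (ha : f a ≤ 0) (hb : 0 < f b) :
    ∃ ξ, IsGreatest {z ∈ Icc a b | f z = 0} ξ ∧ ∀ z ∈ Ioc ξ b, 0 < f z := by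
  have hne : {z ∈ Icc a b | f z = 0}.Nonempty := intermediate_value_Icc hab hf ⟨ha, hb.le⟩
  have hcompact : IsCompact {z ∈ Icc a b | f z = 0} :=
    isCompact_Icc.of_isClosed_subset
      (hf.preimage_isClosed_of_isClosed isClosed_Icc isClosed_singleton) (sep_subset _ _)
  obtain ⟨ξ, hξ⟩ := hcompact.exists_isGreatest hne
  refine ⟨ξ, hξ, fun z hz => ?_⟩
  by_contra! hfz
  have haz : a ≤ z := hξ.1.1.1.trans hz.1.le
  obtain ⟨c, hc, hfc⟩ :=
    intermediate_value_Icc hz.2 (hf.mono (Icc_subset_Icc haz le_rfl)) ⟨hfz, hb.le⟩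
  have hcξ : c ≤ ξ := hξ.2 ⟨⟨haz.trans hc.1, hc.2⟩, hfc⟩
  linarith [hz.1, hc.1]

theorem stmt5 (g : ℝ → ℝ) (hcont : ContinuousOn g (Set.Icc 0 1))
    (h0 : g 0 ≤ 0) (h1 : g 1 = 0)
    (L : ℝ) (hL : HasDerivWithinAt g L (Set.Icc 0 1) 1) (hLneg : L < 0) :
    {z ∈ Set.Ico (0:ℝ) 1 | g z = 0}.Nonempty ∧
    sSup {z ∈ Set.Ico (0:ℝ) 1 | g z = 0} < 1 ∧
    g (sSup {z ∈ Set.Ico (0:ℝ) 1 | g z = 0}) = 0 ∧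
    ∀ z ∈ Set.Ioo (sSup {z ∈ Set.Ico (0:ℝ) 1 | g z = 0}) 1, 0 < g z := by
  have hpos : ∀ᶠ z in 𝓝[<] 1, 0 < g z :=
    (hL.mono_of_mem_nhdsWithin (Icc_mem_nhdsLT one_pos)).eventually_nhdsLT_pos hLneg h1
  obtain ⟨l, hl1, hl⟩ := (mem_nhdsLT_iff_exists_Ioo_subset' zero_lt_one).mp
    (hpos.and (Ioo_mem_nhdsLT zero_lt_one))
  obtain ⟨c, hc⟩ : ∃ c, c ∈ Ioo l 1 := exists_between (mem_Iio.mp hl1)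
  obtain ⟨ξ, hξ, hξpos⟩ := ContinuousOn.exists_isGreatest_zero_pos_after (hl hc).2.1.le
    (hcont.mono (Icc_subset_Icc le_rfl hc.2.le)) h0 (hl hc).1
  have hzeros : {z ∈ Ico (0:ℝ) 1 | g z = 0} = {z ∈ Icc 0 c | g z = 0} := by
    ext z
    constructor
    · rintro ⟨⟨hz0, hz1⟩, hgz⟩
      exact ⟨⟨hz0, not_lt.mp fun hcz => (hl ⟨hc.1.trans hcz, hz1⟩).1.ne' hgz⟩, hgz⟩
    · rintro ⟨⟨hz0, hzc⟩, hgz⟩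
      exact ⟨⟨hz0, hzc.trans_lt hc.2⟩, hgz⟩
  rw [hzeros, hξ.csSup_eq]
  refine ⟨⟨ξ, hξ.1⟩, hξ.1.1.2.trans_lt hc.2, hξ.1.2, fun z hz => ?_⟩
  rcases le_or_gt z c with hzc | hcz
  · exact hξpos z ⟨hz.1, hzc⟩
  · exact (hl ⟨hc.1.trans hcz, hz.2⟩).1
end

section
/- Let φ : [0,1] → ℝ be continuous and concave with φ(0) ≤ 0 and φ(1) = 0, and suppose φ has a derivative L at 1 within [0,1] with L < 0. Then the set S := {z ∈ [0,1) : φ(z) = 0} is nonempty, its supremum ξ̄ := sup S satisfies ξ̄ < 1 and φ(ξ̄) = 0, φ(z) > 0 for every z ∈ (ξ̄, 1), and φ(z) < 0 for every z ∈ [0, ξ̄). -/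
/-!
Since `φ 1 = 0` and `φ'(1⁻) < 0`, `φ` is positive on some interval `(c, 1)`. Hence the zeros of
`φ` in `[0, 1)` are the zeros in the compact interval `[0, c]`; they exist by the intermediate value
theorem (`φ 0 ≤ 0 < φ t` for `t ∈ (c, 1)`) and have a largest element `ξ̄`. By concavity `φ` lies
above the chord through its zeros `ξ̄` and `1`, and is nonzero there by maximality, so `φ > 0` on
`(ξ̄, 1)`; and for `z < ξ̄ < t < 1`, concavity with `φ ξ̄ = 0 < φ t` forces `φ z < 0`.
-/

open Set Filter Topology

theorem HasDerivWithinAt.eventually_lt_of_neg {f : ℝ → ℝ} {f' b : ℝ}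
    (hf : HasDerivWithinAt f f' (Iio b) b) (hf' : f' < 0) : ∀ᶠ t in 𝓝[<] b, f b < f t := by
  rw [hasDerivWithinAt_iff_tendsto_slope, sdiff_singleton_eq_self self_notMem_Iio] at hf
  filter_upwards [hf (Iio_mem_nhds hf'), self_mem_nhdsWithin] with t hslope ht
  rwa [mem_preimage, mem_Iio, slope_comm, slope_neg_iff_of_le ht.le] at hslope

section ZeroSet

variable {φ : ℝ → ℝ} {a b c ξ : ℝ}

theorem setOf_mem_Ico_zero_eq_of_pos (hcb : c < b) (hpos : ∀ t ∈ Ioo c b, 0 < φ t) :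
    {z ∈ Ico a b | φ z = 0} = {z ∈ Icc a c | φ z = 0} := by
  ext z
  simp only [mem_Ico, mem_Icc]
  constructor
  · rintro ⟨⟨haz, hzb⟩, hz⟩
    exact ⟨⟨haz, not_lt.1 fun hcz => (hpos z ⟨hcz, hzb⟩).ne' hz⟩, hz⟩
  · rintro ⟨⟨haz, hzc⟩, hz⟩
    exact ⟨⟨haz, hzc.trans_lt hcb⟩, hz⟩

theorem exists_isGreatest_setOf_mem_Ico_zero (hcont : ContinuousOn φ (Icc a b)) (ha : φ a ≤ 0)
    (hac : a ≤ c) (hcb : c < b) (hpos : ∀ t ∈ Ioo c b, 0 < φ t) :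
    ∃ ξ ≤ c, IsGreatest {z ∈ Ico a b | φ z = 0} ξ := by
  obtain ⟨t, htc, htb⟩ := exists_between hcb
  obtain ⟨z, hz, hφz⟩ := intermediate_value_Icc (hac.trans htc.le)
    (hcont.mono (Icc_subset_Icc_right htb.le)) ⟨ha, (hpos t ⟨htc, htb⟩).le⟩
  have hne : {z ∈ Ico a b | φ z = 0}.Nonempty := ⟨z, ⟨hz.1, hz.2.trans_lt htb⟩, hφz⟩
  rw [setOf_mem_Ico_zero_eq_of_pos hcb hpos] at hne ⊢
  have hcompact : IsCompact {z ∈ Icc a c | φ z = 0} :=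
    isCompact_Icc.of_isClosed_subset
      ((hcont.mono (Icc_subset_Icc_right hcb.le)).preimage_isClosed_of_isClosed isClosed_Icc
        isClosed_singleton) fun z hz => hz.1
  obtain ⟨ξ, hξ⟩ := hcompact.exists_isGreatest hne
  exact ⟨ξ, hξ.1.1.2, hξ⟩

theorem ConcaveOn.pos_of_isGreatest_setOf_mem_Ico_zero (hf : ConcaveOn ℝ (Icc a b) φ)
    (hξ : IsGreatest {z ∈ Ico a b | φ z = 0} ξ) (hb : φ b = 0) {z : ℝ} (hz : z ∈ Ioo ξ b) :
    0 < φ z := by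
  obtain ⟨⟨haξ, hξb⟩, hφξ⟩ := hξ.1
  have hnonneg : min (φ ξ) (φ b) ≤ φ z :=
    hf.ge_on_segment ⟨haξ, hξb.le⟩ ⟨haξ.trans hξb.le, le_rfl⟩
      (segment_eq_Icc hξb.le ▸ Ioo_subset_Icc_self hz)
  rw [hφξ, hb, min_self] at hnonneg
  exact hnonneg.lt_of_ne fun hφz => hz.1.not_ge (hξ.2 ⟨⟨haξ.trans hz.1.le, hz.2⟩, hφz.symm⟩)

end ZeroSet

theorem stmt7 (φ : ℝ → ℝ) (hcont : ContinuousOn φ (Set.Icc 0 1))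
    (hconc : ConcaveOn ℝ (Set.Icc 0 1) φ)
    (h0 : φ 0 ≤ 0) (h1 : φ 1 = 0)
    (L : ℝ) (hL : HasDerivWithinAt φ L (Set.Icc 0 1) 1) (hLneg : L < 0) :
    {z ∈ Set.Ico (0:ℝ) 1 | φ z = 0}.Nonempty ∧
    sSup {z ∈ Set.Ico (0:ℝ) 1 | φ z = 0} < 1 ∧
    φ (sSup {z ∈ Set.Ico (0:ℝ) 1 | φ z = 0}) = 0 ∧
    (∀ z ∈ Set.Ioo (sSup {z ∈ Set.Ico (0:ℝ) 1 | φ z = 0}) 1, 0 < φ z) ∧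
    ∀ z ∈ Set.Ico (0:ℝ) (sSup {z ∈ Set.Ico (0:ℝ) 1 | φ z = 0}), φ z < 0 := by
  obtain ⟨c, ⟨hc0, hc1⟩, hpos⟩ : ∃ c ∈ Ico (0 : ℝ) 1, ∀ t ∈ Ioo c 1, 0 < φ t := by
    have hleft := (hL.mono_of_mem_nhdsWithin (Icc_mem_nhdsLT one_pos)).eventually_lt_of_neg hLneg
    obtain ⟨c, hc, hsub⟩ := (mem_nhdsLT_iff_exists_mem_Ico_Ioo_subset one_pos).1 hleft
    exact ⟨c, hc, fun t ht => h1 ▸ hsub ht⟩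
  obtain ⟨ξ, hξc, hξ⟩ := exists_isGreatest_setOf_mem_Ico_zero hcont h0 hc0 hc1 hpos
  have hright : ∀ z ∈ Ioo ξ 1, 0 < φ z := fun _ =>
    hconc.pos_of_isGreatest_setOf_mem_Ico_zero hξ h1
  have hξ1 : ξ < 1 := hξc.trans_lt hc1
  rw [hξ.csSup_eq]
  refine ⟨⟨ξ, hξ.1⟩, hξ1, hξ.1.2, hright, ?_⟩
  rintro z ⟨hz0, hzξ⟩
  obtain ⟨t, hξt, ht1⟩ := exists_between hξ1
  have hlt : φ z < φ ξ :=
    hconc.left_lt_of_lt_right ⟨hz0, (hzξ.trans hξ1).le⟩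
      ⟨(hz0.trans hzξ.le).trans hξt.le, ht1.le⟩
      (openSegment_eq_Ioo (hzξ.trans hξt) ▸ ⟨hzξ, hξt⟩) (hξ.1.2 ▸ hright t ⟨hξt, ht1⟩)
  rwa [hξ.1.2] at hlt
end

section
/- Let p : ℕ → [0,∞) with ∑_{s} p_s = 1 and λ := ∑_{s} s p_s < ∞, let τ : ℕ → [0,1], and let π ∈ (0,1]. Assume the cascade condition π ∑_{s} s(s−1) p_s τ_s > λ holds. Then for every z ∈ [0,1): ∑_{s} p_s (1 − τ_s) + ∑_{s} p_s τ_s (1 − π + π z)^{s} < 1. -/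
/-!
Write `w = 1 - π + π z ∈ [0, 1)` and `q s = p s τ s`. Since `∑ p s (1 - τ s) + ∑ q s = ∑ p s = 1`,
the claim is `∑ q s w ^ s < ∑ q s`. Termwise `q s w ^ s ≤ q s`, and the cascade condition makes
`∑ s (s - 1) q s` positive, so some `q s` with `s ≠ 0` is positive; there `w ^ s < 1` gives
strictness.
-/

lemma exists_ne_zero_pos_of_tsum_mul_pred_pos {f : ℕ → ℝ} (hf : ∀ s, 0 ≤ f s)
    (h : 0 < ∑' s : ℕ, (s : ℝ) * ((s : ℝ) - 1) * f s) : ∃ s, s ≠ 0 ∧ 0 < f s := by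
  obtain ⟨s, hs⟩ : ∃ s : ℕ, (s : ℝ) * ((s : ℝ) - 1) * f s ≠ 0 := by
    by_contra! h0
    simp [h0] at h
  refine ⟨s, ?_, (hf s).lt_of_ne' (right_ne_zero_of_mul hs)⟩
  rintro rfl
  simp at hs

lemma tsum_mul_pow_lt_tsum {q : ℕ → ℝ} (hq : ∀ s, 0 ≤ q s) (hqs : Summable q) {w : ℝ}
    (hw0 : 0 ≤ w) (hw1 : w < 1) {s₀ : ℕ} (hs₀ : s₀ ≠ 0) (hqs₀ : 0 < q s₀) :
    ∑' s, q s * w ^ s < ∑' s, q s := by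
  refine Summable.tsum_lt_tsum_of_nonneg (i := s₀) (fun s => mul_nonneg (hq s) (pow_nonneg hw0 s))
    (fun s => mul_le_of_le_one_right (hq s) (pow_le_one₀ hw0 hw1.le)) ?_ hqs
  exact mul_lt_of_lt_one_right hqs₀ (pow_lt_one₀ hw0 hw1 hs₀)

lemma tsum_mul_one_sub_add_tsum_mul {p τ : ℕ → ℝ} (hp : Summable p)
    (hpτ : Summable fun s => p s * τ s) :
    ∑' s, p s * (1 - τ s) + ∑' s, p s * τ s = ∑' s, p s := by
  have hsub : Summable fun s => p s * (1 - τ s) := by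
    simpa only [mul_one_sub] using hp.sub hpτ
  rw [← hsub.tsum_add hpτ]
  exact tsum_congr fun s => by ring

theorem stmt8_general (p : ℕ → ℝ) (hp : ∀ s, 0 ≤ p s) (hpsum : Summable p)
    (hp1 : ∑' s : ℕ, p s = 1)
    (τ : ℕ → ℝ) (hτ : ∀ s, τ s ∈ Set.Icc (0:ℝ) 1)
    (π : ℝ) (hπ : π ∈ Set.Ioc (0:ℝ) 1)
    (hcasc : (∑' s : ℕ, (s : ℝ) * p s) <
      π * ∑' s : ℕ, (s : ℝ) * ((s : ℝ) - 1) * p s * τ s) :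
    ∀ z ∈ Set.Ico (0:ℝ) 1,
      (∑' s : ℕ, p s * (1 - τ s)) + (∑' s : ℕ, p s * τ s * (1 - π + π * z) ^ s) < 1 := by
  rintro z ⟨hz0, hz1⟩
  obtain ⟨hπ0, hπ1⟩ := hπ
  have hpτ : ∀ s, 0 ≤ p s * τ s := fun s => mul_nonneg (hp s) (hτ s).1
  have hpτs : Summable fun s => p s * τ s :=
    hpsum.of_nonneg_of_le hpτ fun s => mul_le_of_le_one_right (hp s) (hτ s).2
  have hcasc_pos : 0 < ∑' s : ℕ, (s : ℝ) * ((s : ℝ) - 1) * (p s * τ s) := by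
    have hlam : 0 ≤ ∑' s : ℕ, (s : ℝ) * p s :=
      tsum_nonneg fun s => mul_nonneg s.cast_nonneg (hp s)
    simp_rw [← mul_assoc]
    exact pos_of_mul_pos_right (hlam.trans_lt hcasc) hπ0.le
  obtain ⟨s₀, hs₀, hqs₀⟩ := exists_ne_zero_pos_of_tsum_mul_pred_pos hpτ hcasc_pos
  have hstrict := tsum_mul_pow_lt_tsum hpτ hpτs (w := 1 - π + π * z) (by nlinarith)
    (by nlinarith) hs₀ hqs₀
  have hsplit := tsum_mul_one_sub_add_tsum_mul (τ := τ) hpsum hpτs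
  linarith

theorem stmt8 (p : ℕ → ℝ) (hp : ∀ s, 0 ≤ p s) (hpsum : Summable p)
    (hp1 : ∑' s : ℕ, p s = 1)
    (hlamsum : Summable fun s : ℕ => (s : ℝ) * p s)
    (τ : ℕ → ℝ) (hτ : ∀ s, τ s ∈ Set.Icc (0:ℝ) 1)
    (π : ℝ) (hπ : π ∈ Set.Ioc (0:ℝ) 1)
    (hsum2 : Summable fun s : ℕ => (s : ℝ) * ((s : ℝ) - 1) * p s * τ s)
    (hcasc : (∑' s : ℕ, (s : ℝ) * p s) <
      π * ∑' s : ℕ, (s : ℝ) * ((s : ℝ) - 1) * p s * τ s) :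
    ∀ z ∈ Set.Ico (0:ℝ) 1,
      (∑' s : ℕ, p s * (1 - τ s)) + (∑' s : ℕ, p s * τ s * (1 - π + π * z) ^ s) < 1 :=
  stmt8_general p hp hpsum hp1 τ hτ π hπ hcasc
end

section
/- Let p : ℕ → [0,∞) satisfy ∑_{r} p_r = 1, ∑_{r} r² p_r < ∞, and ∑_{r} r(r−2) p_r > 0. Then: (a) for every q with 1/3 < q ≤ 1, ∑_{r : r < 1/q} r(r−1) p_r < ∑_{r} r p_r; consequently (b) the contagion threshold q_c := sup{ q ∈ (0,1) : ∑_{r : r < 1/q} r(r−1) p_r > ∑_{r} r p_r } satisfies q_c ≤ 1/3. -/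
/-! For `q > 1/3` only the degree `r = 2` survives the truncation `r < 1/q`, so the truncated
sum is at most `2 p₂`. On the other hand `∑ r (r - 2) p_r = -p₁ + ∑_{r ≥ 3} r (r - 2) p_r > 0`
forces `p_r > 0` for some `r ≥ 3`, whence `∑ r p_r ≥ 2 p₂ + r p_r > 2 p₂`. -/

open Finset

section DegreeDistribution

variable {p : ℕ → ℝ}

theorem summable_natCast_mul_of_summable_sq_mul (hp : ∀ r, 0 ≤ p r)
    (h2 : Summable fun r : ℕ => (r : ℝ) ^ 2 * p r) :
    Summable fun r : ℕ => (r : ℝ) * p r := by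
  refine h2.of_nonneg_of_le (fun r => mul_nonneg r.cast_nonneg (hp r)) fun r => ?_
  have hr : (r : ℝ) ≤ (r : ℝ) ^ 2 := by
    rcases r.eq_zero_or_pos with rfl | hr
    · simp
    · nlinarith [(Nat.one_le_cast (α := ℝ)).2 hr]
  exact mul_le_mul_of_nonneg_right hr (hp r)

theorem exists_three_le_pos_of_tsum_mul_sub_two_pos (hp : ∀ r, 0 ≤ p r)
    (hpos : 0 < ∑' r : ℕ, (r : ℝ) * ((r : ℝ) - 2) * p r) :
    ∃ r, 3 ≤ r ∧ 0 < p r := by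
  by_contra! hzero
  have hsum : ∑' r : ℕ, (r : ℝ) * ((r : ℝ) - 2) * p r = -p 1 := by
    rw [tsum_eq_single 1]
    · norm_num
    intro r hr
    match r, hr with
    | 0, _ => simp
    | 2, _ => norm_num
    | r + 3, _ => simp [le_antisymm (hzero (r + 3) (by omega)) (hp (r + 3))]
  linarith [hp 1]

theorem two_mul_lt_tsum_natCast_mul (hp : ∀ r, 0 ≤ p r)
    (hsum : Summable fun r : ℕ => (r : ℝ) * p r) {r₀ : ℕ} (hr₀ : 3 ≤ r₀) (hpr₀ : 0 < p r₀) :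
    2 * p 2 < ∑' r : ℕ, (r : ℝ) * p r := by
  have hpair : (2 : ℝ) * p 2 + r₀ * p r₀ ≤ ∑' r : ℕ, (r : ℝ) * p r := by
    have := hsum.sum_le_tsum {2, r₀} fun r _ => mul_nonneg r.cast_nonneg (hp r)
    rwa [sum_pair (by omega), Nat.cast_ofNat] at this
  have : 0 < (r₀ : ℝ) * p r₀ := mul_pos (by positivity) hpr₀
  linarith

theorem tsum_ite_lt_inv_le_of_third_lt (hp : ∀ r, 0 ≤ p r) {q : ℝ} (hq : 1 / 3 < q) :
    ∑' r : ℕ, (if (r : ℝ) < 1 / q then (r : ℝ) * ((r : ℝ) - 1) * p r else 0) ≤ 2 * p 2 := by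
  have hinv : 1 / q < 3 := by
    rw [div_lt_iff₀ (by linarith)]
    linarith
  rw [tsum_eq_single 2]
  · split_ifs <;> norm_num [hp 2]
  intro r hr
  match r, hr with
  | 0, _ => simp
  | 1, _ => simp
  | r + 3, _ =>
    have : ¬ ((r + 3 : ℕ) : ℝ) < 1 / q := by push_cast; linarith [r.cast_nonneg (α := ℝ)]
    simp only [this, if_false]

end DegreeDistribution

theorem stmt9_general (p : ℕ → ℝ) (hp : ∀ r, 0 ≤ p r)
    (h2 : Summable fun r : ℕ => (r : ℝ) ^ 2 * p r)
    (hpos : 0 < ∑' r : ℕ, (r : ℝ) * ((r : ℝ) - 2) * p r) :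
    -- (a)
    (∀ q : ℝ, 1/3 < q → q ≤ 1 →
      (∑' r : ℕ, (if (r : ℝ) < 1/q then (r : ℝ) * ((r : ℝ) - 1) * p r else 0)) <
        ∑' r : ℕ, (r : ℝ) * p r) ∧
    -- (b)
    sSup {q : ℝ | q ∈ Set.Ioo (0:ℝ) 1 ∧
        (∑' r : ℕ, (r : ℝ) * p r) <
          ∑' r : ℕ, (if (r : ℝ) < 1/q then (r : ℝ) * ((r : ℝ) - 1) * p r else 0)} ≤ 1/3 := by
  obtain ⟨r₀, hr₀, hpr₀⟩ := exists_three_le_pos_of_tsum_mul_sub_two_pos hp hpos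
  have hmean := two_mul_lt_tsum_natCast_mul hp
    (summable_natCast_mul_of_summable_sq_mul hp h2) hr₀ hpr₀
  have parta : ∀ q : ℝ, 1/3 < q → q ≤ 1 →
      (∑' r : ℕ, (if (r : ℝ) < 1/q then (r : ℝ) * ((r : ℝ) - 1) * p r else 0)) <
        ∑' r : ℕ, (r : ℝ) * p r :=
    fun q hq _ => (tsum_ite_lt_inv_le_of_third_lt hp hq).trans_lt hmean
  refine ⟨parta, Real.sSup_le ?_ (by norm_num)⟩
  rintro q ⟨⟨-, hq1⟩, hlt⟩
  by_contra! hq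
  exact (parta q hq hq1.le).not_gt hlt

theorem stmt9 (p : ℕ → ℝ) (hp : ∀ r, 0 ≤ p r) (hpsum : Summable p)
    (hp1 : ∑' r : ℕ, p r = 1)
    (h2 : Summable fun r : ℕ => (r : ℝ) ^ 2 * p r)
    (hpos : 0 < ∑' r : ℕ, (r : ℝ) * ((r : ℝ) - 2) * p r) :
    -- (a)
    (∀ q : ℝ, 1/3 < q → q ≤ 1 →
      (∑' r : ℕ, (if (r : ℝ) < 1/q then (r : ℝ) * ((r : ℝ) - 1) * p r else 0)) <
        ∑' r : ℕ, (r : ℝ) * p r) ∧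
    -- (b)
    sSup {q : ℝ | q ∈ Set.Ioo (0:ℝ) 1 ∧
        (∑' r : ℕ, (r : ℝ) * p r) <
          ∑' r : ℕ, (if (r : ℝ) < 1/q then (r : ℝ) * ((r : ℝ) - 1) * p r else 0)} ≤ 1/3 :=
  stmt9_general p hp h2 hpos
end

section
/- Let q ∈ (0,1), π ∈ [0,1], x ∈ [0,1] with xπ < 1, let p : ℕ → [0,∞) satisfy ∑_{s} s p_s < ∞, and let α : ℕ → [0,1]. Then (1 − xπ) · ∑_{s=0}^{∞} (s+1) p_{s+1} (1 − α_{s+1}) · ( ∑_{j=0}^{s} 1[ j ≤ q(s+1) ] b_{s,j}(xπ) ) = ∑_{s=1}^{∞} (1 − α_s) p_s ∑_{j = s − ⌊qs⌋}^{s} j · b_{s,j}(1 − xπ), both series converging absolutely. -/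
open Finset

lemma binomProb_nonneg_s11 {p : ℝ} (h0 : 0 ≤ p) (h1 : p ≤ 1) (s r : ℕ) : 0 ≤ binomProb s r p := by
  have : 0 ≤ 1 - p := by linarith
  unfold binomProb
  positivity

lemma sum_range_binomProb (s : ℕ) (p : ℝ) : ∑ j ∈ range (s + 1), binomProb s j p = 1 := by
  calc ∑ j ∈ range (s + 1), binomProb s j p
      = ∑ j ∈ range (s + 1), p ^ j * (1 - p) ^ (s - j) * (s.choose j : ℝ) :=
        sum_congr rfl fun j _ => by unfold binomProb; ring
    _ = 1 := by rw [← add_pow, add_sub_cancel, one_pow]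

lemma abs_sum_ite_binomProb_le_one {p : ℝ} (h0 : 0 ≤ p) (h1 : p ≤ 1) (s : ℕ) (P : ℕ → Prop)
    [DecidablePred P] : |∑ j ∈ range (s + 1), if P j then binomProb s j p else 0| ≤ 1 := by
  have hnonneg : ∀ j, 0 ≤ binomProb s j p := binomProb_nonneg_s11 h0 h1 s
  rw [← sum_filter, abs_of_nonneg (sum_nonneg fun j _ => hnonneg j), ← sum_range_binomProb s p]
  exact sum_le_sum_of_subset_of_nonneg (filter_subset _ _) fun j _ _ => hnonneg j

lemma binomProb_one_sub {s r : ℕ} (h : r ≤ s) (p : ℝ) :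
    binomProb s r (1 - p) = binomProb s (s - r) p := by
  unfold binomProb
  rw [Nat.choose_symm h, Nat.sub_sub_self h, sub_sub_cancel]
  ring

lemma add_one_mul_binomProb_succ (t k : ℕ) (p : ℝ) :
    ((k : ℝ) + 1) * binomProb (t + 1) (k + 1) p = ((t : ℝ) + 1) * p * binomProb t k p := by
  have hchoose : ((t : ℝ) + 1) * t.choose k = (t + 1).choose (k + 1) * ((k : ℝ) + 1) := by
    exact_mod_cast Nat.add_one_mul_choose_eq t k
  unfold binomProb
  rw [Nat.add_sub_add_right, pow_succ]
  linear_combination (-(p ^ k * p * (1 - p) ^ (t - k))) * hchoose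

lemma sum_Icc_mul_binomProb_one_sub {m t : ℕ} (hm : m ≤ t) (θ : ℝ) :
    ∑ j ∈ Icc (t + 1 - m) (t + 1), (j : ℝ) * binomProb (t + 1) j (1 - θ)
      = ((t : ℝ) + 1) * (1 - θ) * ∑ j ∈ range (m + 1), binomProb t j θ := by
  rw [mul_sum]
  symm
  refine sum_nbij' (t + 1 - ·) (t + 1 - ·) ?_ ?_ ?_ ?_ ?_ <;> simp only [mem_range, mem_Icc] <;>
    intro j hj
  iterate 4 omega
  have hjt : j ≤ t := by omega
  rw [show t + 1 - j = t - j + 1 by omega, Nat.cast_succ, add_one_mul_binomProb_succ,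
      binomProb_one_sub (Nat.sub_le t j), Nat.sub_sub_self hjt]

lemma sum_range_ite_le_eq_sum_range_floor {M : Type*} [AddCommMonoid M] {r : ℝ} (hr : 0 ≤ r)
    {n : ℕ} (hn : ⌊r⌋₊ ≤ n) (f : ℕ → M) :
    ∑ j ∈ range (n + 1), (if (j : ℝ) ≤ r then f j else 0) = ∑ j ∈ range (⌊r⌋₊ + 1), f j := by
  rw [← sum_filter]
  congr 1
  ext j
  simp only [mem_filter, mem_range, Nat.lt_succ_iff, ← Nat.le_floor_iff hr]
  omega

lemma sum_Icc_floor_mul_binomProb_one_sub {q : ℝ} (hq0 : 0 ≤ q) (hq1 : q < 1) (θ : ℝ) (t : ℕ) :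
    ∑ j ∈ Icc (t + 1 - ⌊q * ((t + 1 : ℕ) : ℝ)⌋₊) (t + 1), (j : ℝ) * binomProb (t + 1) j (1 - θ)
      = ((t : ℝ) + 1) * (1 - θ) *
        ∑ j ∈ range (t + 1), (if (j : ℝ) ≤ q * ((t : ℝ) + 1) then binomProb t j θ else 0) := by
  have hr : 0 ≤ q * ((t : ℝ) + 1) := by positivity
  have hfloor : ⌊q * ((t : ℝ) + 1)⌋₊ ≤ t := by
    have : q * ((t : ℝ) + 1) < ((t + 1 : ℕ) : ℝ) := by push_cast; nlinarith
    have := (Nat.floor_lt hr).mpr this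
    omega
  rw [sum_range_ite_le_eq_sum_range_floor hr hfloor, Nat.cast_succ,
    sum_Icc_mul_binomProb_one_sub hfloor]

theorem stmt11_general (q : ℝ) (hq : q ∈ Set.Ioo (0:ℝ) 1)
    (π x : ℝ) (hπ : π ∈ Set.Icc (0:ℝ) 1) (hx : x ∈ Set.Icc (0:ℝ) 1)
    (p : ℕ → ℝ) (hsum : Summable fun s : ℕ => (s : ℝ) * p s)
    (α : ℕ → ℝ) (hα : ∀ s, α s ∈ Set.Icc (0:ℝ) 1) :
    Summable (fun s : ℕ => ((s : ℝ) + 1) * p (s + 1) * (1 - α (s + 1)) *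
      ∑ j ∈ Finset.range (s + 1),
        (if (j : ℝ) ≤ q * ((s : ℝ) + 1) then binomProb s j (x * π) else 0)) ∧
    Summable (fun s : ℕ => (1 - α s) * p s *
      ∑ j ∈ Finset.Icc (s - Nat.floor (q * (s : ℝ))) s, (j : ℝ) * binomProb s j (1 - x * π)) ∧
    (1 - x * π) * (∑' s : ℕ, ((s : ℝ) + 1) * p (s + 1) * (1 - α (s + 1)) *
        ∑ j ∈ Finset.range (s + 1),
          (if (j : ℝ) ≤ q * ((s : ℝ) + 1) then binomProb s j (x * π) else 0)) =
      ∑' s : ℕ, (1 - α s) * p s *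
        ∑ j ∈ Finset.Icc (s - Nat.floor (q * (s : ℝ))) s, (j : ℝ) * binomProb s j (1 - x * π) := by
  set θ := x * π
  set f : ℕ → ℝ := fun s => ((s : ℝ) + 1) * p (s + 1) * (1 - α (s + 1)) *
    ∑ j ∈ range (s + 1), (if (j : ℝ) ≤ q * ((s : ℝ) + 1) then binomProb s j θ else 0)
  set g : ℕ → ℝ := fun s => (1 - α s) * p s *
    ∑ j ∈ Icc (s - ⌊q * (s : ℝ)⌋₊) s, (j : ℝ) * binomProb s j (1 - θ)
  have hθ0 : 0 ≤ θ := mul_nonneg hx.1 hπ.1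
  have hθ1 : θ ≤ 1 := mul_le_one₀ hx.2 hπ.1 hπ.2
  have hf_le : ∀ s, ‖f s‖ ≤ |((s + 1 : ℕ) : ℝ) * p (s + 1)| := by
    intro s
    have hα_abs : |1 - α (s + 1)| ≤ 1 := abs_le.mpr ⟨by linarith [(hα (s + 1)).2],
      by linarith [(hα (s + 1)).1]⟩
    calc ‖f s‖ = |((s : ℝ) + 1) * p (s + 1)| * |1 - α (s + 1)| *
          |∑ j ∈ range (s + 1), (if (j : ℝ) ≤ q * ((s : ℝ) + 1) then binomProb s j θ else 0)| := by
          rw [Real.norm_eq_abs, abs_mul, abs_mul]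
      _ ≤ |((s : ℝ) + 1) * p (s + 1)| * 1 * 1 := by
          gcongr
          exact abs_sum_ite_binomProb_le_one hθ0 hθ1 s _
      _ = |((s + 1 : ℕ) : ℝ) * p (s + 1)| := by rw [mul_one, mul_one, Nat.cast_succ]
  have hf : Summable f := .of_norm_bounded ((summable_nat_add_iff 1).mpr hsum.abs) hf_le
  have hg_succ : ∀ s, g (s + 1) = (1 - θ) * f s := fun s => by
    simp only [g, f, sum_Icc_floor_mul_binomProb_one_sub hq.1.le hq.2]
    ring
  have hg : Summable g := (summable_nat_add_iff 1).mp (by simpa only [hg_succ] using hf.mul_left _)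
  refine ⟨hf, hg, ?_⟩
  have hg_zero : g 0 = 0 := by simp [g]
  rw [hg.tsum_eq_zero_add, hg_zero, zero_add]
  simp only [hg_succ, tsum_mul_left]

theorem stmt11 (q : ℝ) (hq : q ∈ Set.Ioo (0:ℝ) 1)
    (π x : ℝ) (hπ : π ∈ Set.Icc (0:ℝ) 1) (hx : x ∈ Set.Icc (0:ℝ) 1) (hxπ : x * π < 1)
    (p : ℕ → ℝ) (hp : ∀ s, 0 ≤ p s) (hsum : Summable fun s : ℕ => (s : ℝ) * p s)
    (α : ℕ → ℝ) (hα : ∀ s, α s ∈ Set.Icc (0:ℝ) 1) :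
    Summable (fun s : ℕ => ((s : ℝ) + 1) * p (s + 1) * (1 - α (s + 1)) *
      ∑ j ∈ Finset.range (s + 1),
        (if (j : ℝ) ≤ q * ((s : ℝ) + 1) then binomProb s j (x * π) else 0)) ∧
    Summable (fun s : ℕ => (1 - α s) * p s *
      ∑ j ∈ Finset.Icc (s - Nat.floor (q * (s : ℝ))) s, (j : ℝ) * binomProb s j (1 - x * π)) ∧
    (1 - x * π) * (∑' s : ℕ, ((s : ℝ) + 1) * p (s + 1) * (1 - α (s + 1)) *
        ∑ j ∈ Finset.range (s + 1),
          (if (j : ℝ) ≤ q * ((s : ℝ) + 1) then binomProb s j (x * π) else 0)) =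
      ∑' s : ℕ, (1 - α s) * p s *
        ∑ j ∈ Finset.Icc (s - Nat.floor (q * (s : ℝ))) s, (j : ℝ) * binomProb s j (1 - x * π) :=
  stmt11_general q hq π x hπ hx p hsum α hα
end

section
/- Let a : ℝ → ℝ, λ > 0, π ∈ (0,1], and ξ ∈ [0,1) be such that u := 1 − π(1 − ξ) > 0 and a is differentiable at u. Define Φ(z, ρ) := λ z (1 − ρ(1 − z)) − a(1 − ρ(1 − z)). If the function z ↦ Φ(z, π) has derivative 0 at z = ξ, then the function ρ ↦ Φ(ξ, ρ) has derivative at ρ = π equal to (λ/π)(1 − ξ)(1 − π(1 − ξ)), and this quantity is strictly positive. -/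
/-! Write `w = 1 - ρ (1 - z)` for the percolated argument of `a`. Since `∂w/∂z = ρ` and
`∂w/∂ρ = -(1 - z)`, the two partial derivatives of `Φ` satisfy
`ρ ∂ρΦ = (1 - z) (λ w - ∂zΦ)`. At a critical point in `z` this leaves `∂ρΦ = λ (1 - z) w / ρ`. -/

section PercolatedThreshold

variable {a : ℝ → ℝ} {a' : ℝ} (lam z ρ : ℝ)

theorem hasDerivAt_percolated_fst (ha : HasDerivAt a a' (1 - ρ * (1 - z))) :
    HasDerivAt (fun z => lam * z * (1 - ρ * (1 - z)) - a (1 - ρ * (1 - z)))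
      (lam * (1 - ρ * (1 - z)) + lam * z * ρ - a' * ρ) z := by
  have hw : HasDerivAt (fun z : ℝ => 1 - ρ * (1 - z)) ρ z := by
    simpa using (((hasDerivAt_id z).const_sub 1).const_mul ρ).const_sub 1
  have hlin : HasDerivAt (fun z : ℝ => lam * z) lam z := by
    simpa using (hasDerivAt_id z).const_mul lam
  exact ((hlin.mul hw).sub (ha.comp z hw)).congr_deriv (by ring)

theorem hasDerivAt_percolated_snd (ha : HasDerivAt a a' (1 - ρ * (1 - z))) :
    HasDerivAt (fun ρ => lam * z * (1 - ρ * (1 - z)) - a (1 - ρ * (1 - z)))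
      (-(1 - z) * (lam * z - a')) ρ := by
  have hw : HasDerivAt (fun ρ : ℝ => 1 - ρ * (1 - z)) (-(1 - z)) ρ := by
    simpa using ((hasDerivAt_id ρ).mul_const (1 - z)).const_sub 1
  exact ((hw.const_mul (lam * z)).sub (ha.comp ρ hw)).congr_deriv (by ring)

theorem hasDerivAt_percolated_snd_of_critical (hρ : ρ ≠ 0)
    (ha : DifferentiableAt ℝ a (1 - ρ * (1 - z)))
    (hcrit : HasDerivAt (fun z => lam * z * (1 - ρ * (1 - z)) - a (1 - ρ * (1 - z))) 0 z) :
    HasDerivAt (fun ρ => lam * z * (1 - ρ * (1 - z)) - a (1 - ρ * (1 - z)))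
      (lam / ρ * (1 - z) * (1 - ρ * (1 - z))) ρ := by
  have ha' := ha.hasDerivAt
  have hzero := (hasDerivAt_percolated_fst lam z ρ ha').unique hcrit
  refine (hasDerivAt_percolated_snd lam z ρ ha').congr_deriv ?_
  rw [div_mul_eq_mul_div, div_mul_eq_mul_div, eq_div_iff hρ]
  linear_combination -(1 - z) * hzero

end PercolatedThreshold

theorem stmt12 (a : ℝ → ℝ) (lam : ℝ) (hlam : 0 < lam)
    (π : ℝ) (hπ : π ∈ Set.Ioc (0:ℝ) 1) (ξ : ℝ) (hξ : ξ ∈ Set.Ico (0:ℝ) 1)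
    (hu : 0 < 1 - π * (1 - ξ)) (ha : DifferentiableAt ℝ a (1 - π * (1 - ξ)))
    (hcrit : HasDerivAt (fun z => lam * z * (1 - π * (1 - z)) - a (1 - π * (1 - z))) 0 ξ) :
    HasDerivAt (fun ρ => lam * ξ * (1 - ρ * (1 - ξ)) - a (1 - ρ * (1 - ξ)))
      (lam / π * (1 - ξ) * (1 - π * (1 - ξ))) π ∧
    0 < lam / π * (1 - ξ) * (1 - π * (1 - ξ)) := by
  have hπ0 : 0 < π := hπ.1
  have hξ1 : 0 < 1 - ξ := sub_pos.mpr hξ.2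
  exact ⟨hasDerivAt_percolated_snd_of_critical lam ξ π hπ0.ne' ha hcrit,
    by positivity⟩
end
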